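/- arXiv:1905.12972 — 2 statements merged into one kernel-verified Lean document; each statement's English description precedes it below -/
import Mathlib

section
/- In the theorem that (L∞(μ), L₁(ν)) has the Bishop–Phelps–Bollobás property for positive operators, if moreover the initial function f₀ ∈ S_{L∞(μ)} is nonnegative a.e., then the new point f₁ ∈ S_{L∞(μ)} at which the approximating positive norm-one operator T attains its norm can be chosen nonnegative a.e. -/
open MeasureTheory Filter

section Aux

variable {α β : Type*} [MeasurableSpace α] [MeasurableSpace β] {μ : Measure α} {ν : Measure β}

lemma aux_ae_abs_le_norm (f : Lp ℝ ⊤ μ) : ∀ᵐ x ∂μ, |f x| ≤ ‖f‖ := by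
  filter_upwards [enorm_ae_le_eLpNormEssSup (⇑f) μ] with x hx
  have hne : eLpNormEssSup (⇑f) μ ≠ ⊤ := by
    rw [← eLpNorm_exponent_top]; exact Lp.eLpNorm_ne_top f
  have h2 := ENNReal.toReal_mono hne hx
  simpa [Lp.norm_def, eLpNorm_exponent_top, Real.norm_eq_abs] using h2

lemma aux_norm_le (f : Lp ℝ ⊤ μ) {C : ℝ} (hC : 0 ≤ C) (h : ∀ᵐ x ∂μ, |f x| ≤ C) : ‖f‖ ≤ C := by
  rw [Lp.norm_def, eLpNorm_exponent_top]
  exact ENNReal.toReal_le_of_le_ofReal hC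
    (eLpNormEssSup_le_of_ae_bound (by simpa [Real.norm_eq_abs] using h))

lemma aux_integral_eq_norm (u : Lp ℝ 1 ν) (hu : 0 ≤ u) : ∫ y, u y ∂ν = ‖u‖ := by
  rw [L1.norm_eq_integral_norm]
  refine integral_congr_ae ?_
  filter_upwards [(Lp.coeFn_nonneg u).mpr hu] with y hy
  have hy' : (0:ℝ) ≤ u y := hy
  rw [Real.norm_eq_abs, abs_of_nonneg hy']

lemma aux_int_sub (u v : Lp ℝ 1 ν) :
    ∫ y, (u - v) y ∂ν = (∫ y, u y ∂ν) - ∫ y, v y ∂ν := by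
  rw [integral_congr_ae (Lp.coeFn_sub u v)]
  simpa using integral_sub (L1.integrable_coeFn u) (L1.integrable_coeFn v)

lemma aux_int_smul (c : ℝ) (u : Lp ℝ 1 ν) :
    ∫ y, (c • u) y ∂ν = c * ∫ y, u y ∂ν := by
  rw [integral_congr_ae (Lp.coeFn_smul c u)]
  simpa using integral_smul c (⇑u)

lemma aux_int_add (u v : Lp ℝ 1 ν) :
    ∫ y, (u + v) y ∂ν = (∫ y, u y ∂ν) + ∫ y, v y ∂ν := by
  rw [integral_congr_ae (Lp.coeFn_add u v)]
  simpa using integral_add (L1.integrable_coeFn u) (L1.integrable_coeFn v)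

lemma aux_opNorm_le (W : Lp ℝ ⊤ μ →L[ℝ] Lp ℝ 1 ν)
    (hW : ∀ f : Lp ℝ ⊤ μ, 0 ≤ f → 0 ≤ W f)
    (e : Lp ℝ ⊤ μ) (he : ⇑e =ᵐ[μ] fun _ => (1:ℝ)) :
    ‖W‖ ≤ ‖W e‖ := by
  refine W.opNorm_le_bound (norm_nonneg _) fun f => ?_
  have hr0 : (0:ℝ) ≤ ‖f‖ := norm_nonneg f
  have hb := aux_ae_abs_le_norm f
  have h1 : 0 ≤ ‖f‖ • e - f := by
    rw [← Lp.coeFn_nonneg]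
    filter_upwards [Lp.coeFn_sub (‖f‖ • e) f, Lp.coeFn_smul ‖f‖ e, he, hb] with x h₁ h₂ h₃ h₄
    have hx : (‖f‖ • e - f) x = ‖f‖ * e x - f x := by
      rw [h₁, Pi.sub_apply, h₂, Pi.smul_apply, smul_eq_mul]
    have h₃' : e x = 1 := h₃
    have := (abs_le.mp h₄).2
    simp only [Pi.zero_apply, hx, h₃', mul_one]
    linarith
  have h2 : 0 ≤ ‖f‖ • e + f := by
    rw [← Lp.coeFn_nonneg]
    filter_upwards [Lp.coeFn_add (‖f‖ • e) f, Lp.coeFn_smul ‖f‖ e, he, hb] with x h₁ h₂ h₃ h₄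
    have hx : (‖f‖ • e + f) x = ‖f‖ * e x + f x := by
      rw [h₁, Pi.add_apply, h₂, Pi.smul_apply, smul_eq_mul]
    have h₃' : e x = 1 := h₃
    have := (abs_le.mp h₄).1
    simp only [Pi.zero_apply, hx, h₃', mul_one]
    linarith
  have hw1 := hW _ h1
  have hw2 := hW _ h2
  rw [map_sub, _root_.map_smul] at hw1
  rw [map_add, _root_.map_smul] at hw2
  have key : ∀ᵐ y ∂ν, ‖(W f) y‖ ≤ ‖(‖f‖ • W e) y‖ := by
    filter_upwards [(Lp.coeFn_nonneg _).mpr hw1, (Lp.coeFn_nonneg _).mpr hw2,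
      Lp.coeFn_sub (‖f‖ • W e) (W f), Lp.coeFn_add (‖f‖ • W e) (W f)] with y a1 a2 a3 a4
    have e1 : (0:ℝ) ≤ (‖f‖ • W e) y - (W f) y := by
      have : (0:ℝ) ≤ (‖f‖ • W e - W f) y := a1
      rwa [a3, Pi.sub_apply] at this
    have e2 : (0:ℝ) ≤ (‖f‖ • W e) y + (W f) y := by
      have : (0:ℝ) ≤ (‖f‖ • W e + W f) y := a2
      rwa [a4, Pi.add_apply] at this
    rw [Real.norm_eq_abs, Real.norm_eq_abs, abs_le]
    constructor
    · calc -|(‖f‖ • W e) y| ≤ -((‖f‖ • W e) y) := by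
            simp [neg_le_neg_iff, le_abs_self]
        _ ≤ (W f) y := by linarith
    · calc (W f) y ≤ (‖f‖ • W e) y := by linarith
        _ ≤ |(‖f‖ • W e) y| := le_abs_self _
  calc ‖W f‖ ≤ ‖‖f‖ • W e‖ := Lp.norm_le_norm_of_ae_le key
    _ = ‖W e‖ * ‖f‖ := by
        rw [norm_smul, Real.norm_eq_abs, abs_of_nonneg hr0, mul_comm]

lemma aux_mul_mem (c : α → ℝ) (hc : ∀ x, |c x| ≤ 1) (hcm : AEStronglyMeasurable c μ)
    (f : Lp ℝ ⊤ μ) : MemLp (fun x => c x * f x) ⊤ μ := by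
  refine memLp_top_of_bound (hcm.mul (Lp.aestronglyMeasurable f)) ‖f‖ ?_
  filter_upwards [aux_ae_abs_le_norm f] with x hx
  rw [Real.norm_eq_abs, abs_mul]
  calc |c x| * |f x| ≤ 1 * |f x| := mul_le_mul_of_nonneg_right (hc x) (abs_nonneg _)
    _ ≤ ‖f‖ := by rw [one_mul]; exact hx

/-- The operator `f ↦ S (c · f)` for a bounded measurable weight `c`. -/
noncomputable def auxV (S : Lp ℝ ⊤ μ →L[ℝ] Lp ℝ 1 ν) (c : α → ℝ)
    (hc : ∀ x, |c x| ≤ 1) (hcm : AEStronglyMeasurable c μ) :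
    Lp ℝ ⊤ μ →L[ℝ] Lp ℝ 1 ν :=
  LinearMap.mkContinuous
    { toFun := fun f => S ((aux_mul_mem c hc hcm f).toLp _)
      map_add' := by
        intro f g
        rw [← map_add]
        have h : (aux_mul_mem c hc hcm (f + g)).toLp _
            = ((aux_mul_mem c hc hcm f).add (aux_mul_mem c hc hcm g)).toLp
              ((fun x => c x * f x) + fun x => c x * g x) := by
          refine MemLp.toLp_congr _ _ ?_
          filter_upwards [Lp.coeFn_add f g] with x hx
          have hx' : (↑↑(f + g) : α → ℝ) x = f x + g x := hx
          simp only [Pi.add_apply, hx']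
          ring
        rw [h, MemLp.toLp_add]
      map_smul' := by
        intro r f
        rw [RingHom.id_apply, ← _root_.map_smul]
        have h : (aux_mul_mem c hc hcm (r • f)).toLp _
            = ((aux_mul_mem c hc hcm f).const_smul r).toLp (r • fun x => c x * f x) := by
          refine MemLp.toLp_congr _ _ ?_
          filter_upwards [Lp.coeFn_smul r f] with x hx
          have hx' : (↑↑(r • f) : α → ℝ) x = r * f x := hx
          simp only [Pi.smul_apply, smul_eq_mul, hx']
          ring
        rw [h, MemLp.toLp_const_smul] }
    ‖S‖
    (by
      intro f
      have h1 : ‖(aux_mul_mem c hc hcm f).toLp _‖ ≤ ‖f‖ := by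
        refine aux_norm_le _ (norm_nonneg f) ?_
        filter_upwards [(aux_mul_mem c hc hcm f).coeFn_toLp, aux_ae_abs_le_norm f] with x hx hbx
        rw [hx, abs_mul]
        calc |c x| * |f x| ≤ 1 * |f x| := mul_le_mul_of_nonneg_right (hc x) (abs_nonneg _)
          _ ≤ ‖f‖ := by rw [one_mul]; exact hbx
      calc ‖S ((aux_mul_mem c hc hcm f).toLp _)‖ ≤ ‖S‖ * ‖(aux_mul_mem c hc hcm f).toLp _‖ :=
            S.le_opNorm _
        _ ≤ ‖S‖ * ‖f‖ := mul_le_mul_of_nonneg_left h1 (norm_nonneg S))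

lemma auxV_apply (S : Lp ℝ ⊤ μ →L[ℝ] Lp ℝ 1 ν) (c : α → ℝ)
    (hc : ∀ x, |c x| ≤ 1) (hcm : AEStronglyMeasurable c μ) (f : Lp ℝ ⊤ μ) :
    auxV S c hc hcm f = S ((aux_mul_mem c hc hcm f).toLp _) := rfl

end Aux

set_option maxHeartbeats 4000000 in
/-- Positive version of the Bishop–Phelps–Bollobás theorem for `(L∞(μ), L₁(ν))`: with
`η = (ε/58)⁴`, if the initial norm-one function `f₀` is nonnegative a.e., then the new
norm-one point `f₁` at which the approximating positive norm-one operator `T` attains its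
norm can be chosen nonnegative as well. -/
theorem bishopPhelpsBollobas_positive_Linfty_L1_of_nonneg
    {α β : Type*} [MeasurableSpace α] [MeasurableSpace β]
    (μ : Measure α) (ν : Measure β)
    (ε : ℝ) (hε0 : 0 < ε) (hε1 : ε < 1)
    (S : Lp ℝ ⊤ μ →L[ℝ] Lp ℝ 1 ν)
    (hSpos : ∀ f : Lp ℝ ⊤ μ, 0 ≤ f → 0 ≤ S f) (hSnorm : ‖S‖ = 1)
    (f₀ : Lp ℝ ⊤ μ) (hf₀ : ‖f₀‖ = 1) (hf₀pos : 0 ≤ f₀)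
    (hS : ‖S f₀‖ > 1 - (ε / 58) ^ 4) :
    ∃ (f₁ : Lp ℝ ⊤ μ) (T : Lp ℝ ⊤ μ →L[ℝ] Lp ℝ 1 ν),
      0 ≤ f₁ ∧ ‖f₁‖ = 1 ∧ (∀ f : Lp ℝ ⊤ μ, 0 ≤ f → 0 ≤ T f) ∧ ‖T‖ = 1 ∧
      ‖T f₁‖ = 1 ∧ ‖f₁ - f₀‖ < ε ∧ ‖T - S‖ < ε := by
  classical
  set η : ℝ := (ε / 58) ^ 4 with hηdef
  set δ : ℝ := ε / 2 with hδdef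
  clear_value η δ
  have hδ0 : 0 < δ := by rw [hδdef]; positivity
  have hηpos : 0 < η := by rw [hηdef]; positivity
  have hηδ : η < δ := by
    rw [hηdef, hδdef]
    have h1 : (ε/58)^4 ≤ (ε/58)^1 :=
      pow_le_pow_of_le_one (by positivity) (by linarith) (by norm_num)
    simp only [pow_one] at h1
    linarith
  -- basic a.e. facts about f₀
  have hb₀ : ∀ᵐ x ∂μ, |f₀ x| ≤ 1 := by simpa [hf₀] using aux_ae_abs_le_norm f₀
  have hp₀ : ∀ᵐ x ∂μ, 0 ≤ f₀ x := by
    filter_upwards [(Lp.coeFn_nonneg f₀).mpr hf₀pos] with x hx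
    exact hx
  -- the constant-one function
  have hemem : MemLp (fun _ : α => (1:ℝ)) ⊤ μ := memLp_top_const 1
  set e : Lp ℝ ⊤ μ := hemem.toLp _ with hedef
  have he : ⇑e =ᵐ[μ] fun _ => (1:ℝ) := hemem.coeFn_toLp
  clear_value e
  have hepos : 0 ≤ e := by
    rw [← Lp.coeFn_nonneg]
    filter_upwards [he] with x hx
    simp [hx]
  have henorm : ‖e‖ ≤ 1 := aux_norm_le e zero_le_one
    (by filter_upwards [he] with x hx; simp [hx])
  -- the indicator of the set where f₀ is close to 1
  have hA : MeasurableSet {x | 1 - δ < f₀ x} :=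
    measurableSet_lt measurable_const (Lp.stronglyMeasurable f₀).measurable
  set χfun : α → ℝ := {x | 1 - δ < f₀ x}.indicator (fun _ => (1:ℝ)) with hχdef
  have hχ01 : ∀ x, 0 ≤ χfun x ∧ χfun x ≤ 1 := by
    intro x
    by_cases hx : x ∈ {x | 1 - δ < f₀ x} <;>
      simp [hχdef, Set.indicator_of_mem, Set.indicator_of_notMem, hx]
  have hχabs : ∀ x, |χfun x| ≤ 1 := fun x =>
    abs_le.mpr ⟨by linarith [(hχ01 x).1], (hχ01 x).2⟩
  have hχmem : MemLp χfun ⊤ μ := MemLp.indicator hA (memLp_top_const 1)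
  set χ : Lp ℝ ⊤ μ := hχmem.toLp _ with hχLdef
  have hχae : ⇑χ =ᵐ[μ] χfun := hχmem.coeFn_toLp
  clear_value χ
  have hχpos : 0 ≤ χ := by
    rw [← Lp.coeFn_nonneg]
    filter_upwards [hχae] with x hx
    simpa [hx] using (hχ01 x).1
  have hχnorm : ‖χ‖ ≤ 1 := aux_norm_le χ zero_le_one
    (by filter_upwards [hχae] with x hx; rw [hx]; exact hχabs x)
  -- the new point f₁
  set f₁fun : α → ℝ := fun x => if 1 - δ < f₀ x then (1:ℝ) else f₀ x with hf₁def
  have hf₁meas : Measurable f₁fun :=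
    Measurable.ite hA measurable_const (Lp.stronglyMeasurable f₀).measurable
  have hf₁mem : MemLp f₁fun ⊤ μ := by
    refine memLp_top_of_bound hf₁meas.aestronglyMeasurable 1 ?_
    filter_upwards [hb₀] with x hx
    by_cases h : 1 - δ < f₀ x
    · simp [hf₁def, h]
    · simpa [hf₁def, h, Real.norm_eq_abs] using hx
  set f₁ : Lp ℝ ⊤ μ := hf₁mem.toLp _ with hf₁L
  have hf₁ae : ⇑f₁ =ᵐ[μ] f₁fun := hf₁mem.coeFn_toLp
  clear_value f₁
  have hf₁pos : 0 ≤ f₁ := by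
    rw [← Lp.coeFn_nonneg]
    filter_upwards [hf₁ae, hp₀] with x hx hx0
    rw [Pi.zero_apply, hx]
    by_cases h : 1 - δ < f₀ x
    · simp [hf₁def, h]
    · simpa [hf₁def, h] using hx0
  have hf₁normle : ‖f₁‖ ≤ 1 := by
    refine aux_norm_le f₁ zero_le_one ?_
    filter_upwards [hf₁ae, hb₀] with x hx hbx
    rw [hx]
    by_cases h : 1 - δ < f₀ x
    · simp [hf₁def, h]
    · simpa [hf₁def, h] using hbx
  have hf₁norm : ‖f₁‖ = 1 := by
    refine le_antisymm hf₁normle ?_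
    rw [← hf₀]
    refine Lp.norm_le_norm_of_ae_le ?_
    filter_upwards [hf₁ae, hb₀, hp₀] with x hx hbx hx0
    rw [hx, Real.norm_eq_abs, Real.norm_eq_abs, abs_of_nonneg hx0]
    by_cases h : 1 - δ < f₀ x
    · have h1 : f₁fun x = 1 := by simp [hf₁def, h]
      rw [h1, abs_one]
      exact (abs_le.mp hbx).2
    · have h1 : f₁fun x = f₀ x := by simp [hf₁def, h]
      rw [h1]
      exact le_abs_self _
  have hf₁dist : ‖f₁ - f₀‖ < ε := by
    have hle : ‖f₁ - f₀‖ ≤ δ := by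
      refine aux_norm_le _ hδ0.le ?_
      filter_upwards [Lp.coeFn_sub f₁ f₀, hf₁ae, hb₀] with x hsx hx hbx
      rw [hsx, Pi.sub_apply, hx]
      by_cases h : 1 - δ < f₀ x
      · have h1 : f₁fun x = 1 := by simp [hf₁def, h]
        rw [h1, abs_of_nonneg (by linarith [(abs_le.mp hbx).2])]
        linarith
      · have h1 : f₁fun x = f₀ x := by simp [hf₁def, h]
        rw [h1]
        simpa using hδ0.le
    rw [hδdef] at hle
    linarith
  -- norm-one facts for S at the constant function
  have hSe_pos : 0 ≤ S e := hSpos e hepos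
  have hSe_norm : ‖S e‖ = 1 := by
    have h1 : ‖S e‖ ≤ 1 := by
      calc ‖S e‖ ≤ ‖S‖ * ‖e‖ := S.le_opNorm e
        _ ≤ 1 := by rw [hSnorm, one_mul]; exact henorm
    have h2 : (1:ℝ) ≤ ‖S e‖ := by
      rw [← hSnorm]; exact aux_opNorm_le S hSpos e he
    linarith
  have hSe_int : ∫ y, (S e) y ∂ν = 1 := by
    rw [aux_integral_eq_norm _ hSe_pos, hSe_norm]
  have hSχ_pos : 0 ≤ S χ := hSpos χ hχpos
  set a : ℝ := ‖S χ‖ with hadef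
  clear_value a
  have ha_int : ∫ y, (S χ) y ∂ν = a := by
    rw [hadef]; exact aux_integral_eq_norm _ hSχ_pos
  have ha_le : a ≤ 1 := by
    rw [hadef]
    calc ‖S χ‖ ≤ ‖S‖ * ‖χ‖ := S.le_opNorm χ
      _ ≤ 1 := by rw [hSnorm, one_mul]; exact hχnorm
  -- the main integral estimate
  have hG : f₀ ≤ (1 - δ) • (e - χ) + χ := by
    rw [← Lp.coeFn_le]
    filter_upwards [Lp.coeFn_add ((1-δ) • (e - χ)) χ, Lp.coeFn_smul (1-δ) (e - χ),
      Lp.coeFn_sub e χ, he, hχae, hb₀] with x h₁ h₂ h₃ h₄ h₅ h₆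
    have hGx : ((1 - δ) • (e - χ) + χ) x = (1 - δ) * (e x - χ x) + χ x := by
      rw [h₁, Pi.add_apply, h₂, Pi.smul_apply, h₃, Pi.sub_apply, smul_eq_mul]
    have he1 : e x = 1 := h₄
    have hc1 : χ x = χfun x := h₅
    rw [hGx, he1, hc1]
    by_cases h : x ∈ {x | 1 - δ < f₀ x}
    · have hx1 : χfun x = 1 := by rw [hχdef]; simp [Set.indicator_of_mem h]
      rw [hx1]
      have := (abs_le.mp h₆).2
      nlinarith
    · have hx0 : χfun x = 0 := by rw [hχdef]; simp [Set.indicator_of_notMem h]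
      rw [hx0]
      have hfx : f₀ x ≤ 1 - δ := not_lt.mp h
      nlinarith
  have hSmono : ∫ y, (S f₀) y ∂ν ≤ ∫ y, (S ((1 - δ) • (e - χ) + χ)) y ∂ν := by
    have hd : 0 ≤ S ((1 - δ) • (e - χ) + χ - f₀) := hSpos _ (sub_nonneg.mpr hG)
    rw [map_sub] at hd
    have hd' : S f₀ ≤ S ((1 - δ) • (e - χ) + χ) := by rwa [sub_nonneg] at hd
    exact integral_mono_ae (L1.integrable_coeFn _) (L1.integrable_coeFn _)
      ((Lp.coeFn_le _ _).mpr hd')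
  have hint : ∫ y, (S ((1 - δ) • (e - χ) + χ)) y ∂ν = (1 - δ) * (1 - a) + a := by
    rw [map_add, _root_.map_smul, map_sub, aux_int_add, aux_int_smul, aux_int_sub,
      hSe_int, ha_int]
  have hSf₀_int : 1 - η < ∫ y, (S f₀) y ∂ν := by
    rw [aux_integral_eq_norm _ (hSpos f₀ hf₀pos)]
    exact hS
  have hkey : δ * (1 - a) < η := by nlinarith [hSmono, hint, hSf₀_int]
  have ha_pos : 0 < a := by
    by_contra hcon
    push_neg at hcon
    nlinarith [mul_nonpos_of_nonneg_of_nonpos hδ0.le hcon]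
  -- the operator V
  set V : Lp ℝ ⊤ μ →L[ℝ] Lp ℝ 1 ν := auxV S χfun hχabs hχmem.aestronglyMeasurable with hVdef
  have hVapp : ∀ f : Lp ℝ ⊤ μ,
      V f = S ((aux_mul_mem χfun hχabs hχmem.aestronglyMeasurable f).toLp _) := fun f => rfl
  clear_value V
  have hVpos : ∀ f : Lp ℝ ⊤ μ, 0 ≤ f → 0 ≤ V f := by
    intro f hf
    rw [hVapp f]
    refine hSpos _ ?_
    rw [← Lp.coeFn_nonneg]
    filter_upwards [(aux_mul_mem χfun hχabs hχmem.aestronglyMeasurable f).coeFn_toLp,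
      (Lp.coeFn_nonneg f).mpr hf] with x hx hfx
    rw [Pi.zero_apply, hx]
    exact mul_nonneg (hχ01 x).1 hfx
  have hVe : V e = S χ := by
    rw [hVapp e]
    have h : (aux_mul_mem χfun hχabs hχmem.aestronglyMeasurable e).toLp _ = χ := by
      rw [hχLdef]
      refine MemLp.toLp_congr _ _ ?_
      filter_upwards [he] with x hx
      have hx' : e x = 1 := hx
      simp [hx']
    rw [h]
  have hVf₁ : V f₁ = S χ := by
    rw [hVapp f₁]
    have h : (aux_mul_mem χfun hχabs hχmem.aestronglyMeasurable f₁).toLp _ = χ := by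
      rw [hχLdef]
      refine MemLp.toLp_congr _ _ ?_
      filter_upwards [hf₁ae] with x hx
      rw [hx]
      by_cases hm : x ∈ {x | 1 - δ < f₀ x}
      · have h' : 1 - δ < f₀ x := hm
        have hx1 : χfun x = 1 := by rw [hχdef]; simp [Set.indicator_of_mem hm]
        have hf1 : f₁fun x = 1 := by simp [hf₁def, h']
        rw [hx1, hf1, one_mul]
      · have h' : ¬ (1 - δ < f₀ x) := hm
        have hx0 : χfun x = 0 := by rw [hχdef]; simp [Set.indicator_of_notMem hm]
        rw [hx0, zero_mul]
    rw [h]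
  have hVnorm_le : ‖V‖ ≤ a := by
    have h := aux_opNorm_le V hVpos e he
    rwa [hVe, ← hadef] at h
  -- S - V is positive and small
  have hSVpos : ∀ f : Lp ℝ ⊤ μ, 0 ≤ f → 0 ≤ (S - V) f := by
    intro f hf
    have hsv : (S - V) f
        = S (f - (aux_mul_mem χfun hχabs hχmem.aestronglyMeasurable f).toLp _) := by
      rw [ContinuousLinearMap.sub_apply, hVapp f, ← map_sub]
    rw [hsv]
    refine hSpos _ ?_
    rw [← Lp.coeFn_nonneg]
    filter_upwards [Lp.coeFn_sub f ((aux_mul_mem χfun hχabs hχmem.aestronglyMeasurable f).toLp _),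
      (aux_mul_mem χfun hχabs hχmem.aestronglyMeasurable f).coeFn_toLp,
      (Lp.coeFn_nonneg f).mpr hf] with x h₁ h₂ h₃
    rw [Pi.zero_apply, h₁, Pi.sub_apply, h₂]
    have hx3 : (0:ℝ) ≤ f x := h₃
    nlinarith [(hχ01 x).1, (hχ01 x).2]
  have hSV_le : ‖S - V‖ ≤ 1 - a := by
    have h1 := aux_opNorm_le (S - V) hSVpos e he
    have h2 : (S - V) e = S (e - χ) := by
      rw [ContinuousLinearMap.sub_apply, hVe, ← map_sub]
    have h3 : 0 ≤ S (e - χ) := by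
      refine hSpos _ ?_
      rw [← Lp.coeFn_nonneg]
      filter_upwards [Lp.coeFn_sub e χ, he, hχae] with x h₁ h₂ h₃
      rw [Pi.zero_apply, h₁, Pi.sub_apply]
      have he1 : e x = 1 := h₂
      have hc1 : χ x = χfun x := h₃
      rw [he1, hc1]
      linarith [(hχ01 x).2]
    have h4 : ‖S (e - χ)‖ = 1 - a := by
      rw [← aux_integral_eq_norm _ h3, map_sub, aux_int_sub, hSe_int, ha_int]
    rw [h2, h4] at h1
    exact h1
  -- the operator T
  set T : Lp ℝ ⊤ μ →L[ℝ] Lp ℝ 1 ν := a⁻¹ • V with hTdef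
  clear_value T
  have hainv : (0:ℝ) ≤ a⁻¹ := inv_nonneg.mpr ha_pos.le
  have hTpos : ∀ f : Lp ℝ ⊤ μ, 0 ≤ f → 0 ≤ T f := by
    intro f hf
    have h := hVpos f hf
    rw [hTdef, ContinuousLinearMap.smul_apply, ← Lp.coeFn_nonneg]
    filter_upwards [Lp.coeFn_smul a⁻¹ (V f), (Lp.coeFn_nonneg _).mpr h] with y h₁ h₂
    rw [Pi.zero_apply, h₁, Pi.smul_apply, smul_eq_mul]
    exact mul_nonneg hainv h₂
  have hTf₁norm : ‖T f₁‖ = 1 := by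
    rw [hTdef, ContinuousLinearMap.smul_apply, hVf₁, norm_smul, Real.norm_eq_abs,
      abs_of_nonneg hainv, ← hadef]
    exact inv_mul_cancel₀ ha_pos.ne'
  have hTnorm : ‖T‖ = 1 := by
    refine le_antisymm ?_ ?_
    · have h1 : ‖T‖ ≤ ‖a⁻¹‖ * ‖V‖ := by
        rw [hTdef]; exact ContinuousLinearMap.opNorm_smul_le a⁻¹ V
      have h2 : ‖a⁻¹‖ = a⁻¹ := by rw [Real.norm_eq_abs, abs_of_nonneg hainv]
      have h3 : a⁻¹ * ‖V‖ ≤ a⁻¹ * a := mul_le_mul_of_nonneg_left hVnorm_le hainv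
      have h4 : a⁻¹ * a = 1 := inv_mul_cancel₀ ha_pos.ne'
      calc ‖T‖ ≤ ‖a⁻¹‖ * ‖V‖ := h1
        _ = a⁻¹ * ‖V‖ := by rw [h2]
        _ ≤ 1 := by rw [← h4]; exact h3
    · have h := T.le_opNorm f₁
      rw [hTf₁norm, hf₁norm, mul_one] at h
      exact h
  -- distance from S to T
  have hinv1 : (1:ℝ) ≤ a⁻¹ := by
    have h := mul_le_mul_of_nonneg_left ha_le hainv
    rwa [inv_mul_cancel₀ ha_pos.ne', mul_one] at h
  have hTV : ‖T - V‖ ≤ 1 - a := by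
    have hEq : T - V = (a⁻¹ - 1) • V := by
      rw [hTdef, sub_smul, one_smul]
    have h1 : ‖T - V‖ ≤ ‖a⁻¹ - 1‖ * ‖V‖ := by
      rw [hEq]; exact ContinuousLinearMap.opNorm_smul_le _ _
    have h2 : ‖a⁻¹ - 1‖ = a⁻¹ - 1 := by
      rw [Real.norm_eq_abs, abs_of_nonneg (by linarith)]
    have h3 : (a⁻¹ - 1) * ‖V‖ ≤ (a⁻¹ - 1) * a :=
      mul_le_mul_of_nonneg_left hVnorm_le (by linarith)
    have h4 : (a⁻¹ - 1) * a = 1 - a := by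
      rw [sub_mul, inv_mul_cancel₀ ha_pos.ne', one_mul]
    calc ‖T - V‖ ≤ ‖a⁻¹ - 1‖ * ‖V‖ := h1
      _ = (a⁻¹ - 1) * ‖V‖ := by rw [h2]
      _ ≤ 1 - a := by rw [← h4]; exact h3
  have hTS : ‖T - S‖ < ε := by
    have hbound : ‖T - S‖ ≤ (1 - a) + (1 - a) := by
      refine ContinuousLinearMap.opNorm_le_bound _ (by linarith) fun f => ?_
      have h1 : (T - S) f = (T f - V f) + (V f - S f) := by
        rw [ContinuousLinearMap.sub_apply, sub_add_sub_cancel]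
      have h2 : ‖T f - V f‖ ≤ (1 - a) * ‖f‖ := by
        have h := (T - V).le_opNorm f
        rw [ContinuousLinearMap.sub_apply] at h
        exact h.trans (mul_le_mul_of_nonneg_right hTV (norm_nonneg f))
      have h3 : ‖V f - S f‖ ≤ (1 - a) * ‖f‖ := by
        have h := (S - V).le_opNorm f
        rw [ContinuousLinearMap.sub_apply] at h
        rw [norm_sub_rev]
        exact h.trans (mul_le_mul_of_nonneg_right hSV_le (norm_nonneg f))
      rw [h1]
      calc ‖(T f - V f) + (V f - S f)‖ ≤ ‖T f - V f‖ + ‖V f - S f‖ := norm_add_le _ _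
        _ ≤ ((1 - a) + (1 - a)) * ‖f‖ := by rw [add_mul]; exact add_le_add h2 h3
    have hηb : η ≤ ε^2 / 16 := by
      have hsq : ε^2 ≤ 1 := by nlinarith
      have h4 : ε^4 ≤ ε^2 := by
        calc ε^4 = ε^2 * ε^2 := by ring
          _ ≤ 1 * ε^2 := mul_le_mul_of_nonneg_right hsq (sq_nonneg ε)
          _ = ε^2 := one_mul _
      have h5 : η = ε^4 / 58^4 := by rw [hηdef]; ring
      rw [h5]
      have h6 : (0:ℝ) ≤ ε^2 := sq_nonneg ε
      norm_num
      linarith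
    have h8 : ε * (1 - a) < ε * (ε/8) := by
      rw [hδdef] at hkey
      nlinarith
    have h9 : 1 - a < ε/8 := lt_of_mul_lt_mul_left h8 hε0.le
    linarith [hbound]
  exact ⟨f₁, T, hf₁pos, hf₁norm, hTpos, hTnorm, hTf₁norm, hf₁dist, hTS⟩
end

section
/- For any positive measure μ, the pair (c₀, L₁(μ)) has the Bishop–Phelps–Bollobás property for positive operators: for every 0 < ε < 1, with η(ε) = (ε/58)⁴, whenever S : c₀ → L₁(μ) is a positive operator with ‖S‖ = 1 and x₀ ∈ S_{c₀} satisfies ‖S(x₀)‖₁ > 1 - η(ε), there exist u₀ ∈ S_{c₀} and a positive operator T with ‖T‖ = 1 such that ‖T(u₀)‖₁ = 1, ‖u₀ - x₀‖∞ < ε, and ‖T - S‖ < ε. -/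
open MeasureTheory ZeroAtInfty Filter Topology

noncomputable section BPBaux

def c0ofFin (s : Finset ℕ) (c : ℕ → ℝ) : C₀(ℕ, ℝ) where
  toFun := fun m => if m ∈ s then c m else 0
  continuous_toFun := continuous_of_discreteTopology
  zero_at_infty' := by
    refine Filter.Tendsto.congr' ?_ tendsto_const_nhds
    refine Filter.eventuallyEq_of_mem
      (Filter.mem_cocompact.2 ⟨(s : Set ℕ), s.finite_toSet.isCompact, subset_rfl⟩) ?_
    intro m hm
    simp only [Set.mem_compl_iff, Finset.mem_coe] at hm
    simp [hm]

@[simp] lemma c0ofFin_apply (s : Finset ℕ) (c : ℕ → ℝ) (m : ℕ) :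
    c0ofFin s c m = if m ∈ s then c m else 0 := rfl

lemma c0_norm_le (f : C₀(ℕ, ℝ)) {C : ℝ} (h0 : 0 ≤ C) (h : ∀ n, |f n| ≤ C) : ‖f‖ ≤ C := by
  rw [← ZeroAtInftyContinuousMap.norm_toBCF_eq_norm]
  exact BoundedContinuousFunction.norm_le h0 |>.2 (fun n => h n)

lemma c0_apply_le_norm (f : C₀(ℕ, ℝ)) (n : ℕ) : |f n| ≤ ‖f‖ := by
  rw [← ZeroAtInftyContinuousMap.norm_toBCF_eq_norm]
  exact f.toBCF.norm_coe_le_norm n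

def eC0 (n : ℕ) : C₀(ℕ, ℝ) := c0ofFin {n} (fun _ => 1)

@[simp] lemma eC0_apply (n m : ℕ) : eC0 n m = if m = n then 1 else 0 := by
  simp [eC0]

lemma c0ofFin_eq_sum (s : Finset ℕ) (c : ℕ → ℝ) :
    c0ofFin s c = ∑ n ∈ s, c n • eC0 n := by
  ext m
  have : ((∑ n ∈ s, c n • eC0 n : C₀(ℕ, ℝ)) : ℕ → ℝ) m = ∑ n ∈ s, c n * (eC0 n m) := by
    induction s using Finset.induction_on with
    | empty => simp
    | insert _ _ h ih =>
      rw [Finset.sum_insert h, Finset.sum_insert h, ZeroAtInftyContinuousMap.coe_add,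
        Pi.add_apply, ih, ZeroAtInftyContinuousMap.coe_smul]
      rfl
  rw [this]
  by_cases hm : m ∈ s
  · rw [Finset.sum_eq_single m (by intro b _ hb; simp [hb.symm, Ne.symm hb])
      (by intro h; exact absurd hm h)]
    simp [hm]
  · simp only [c0ofFin_apply, if_neg hm]
    refine (Finset.sum_eq_zero ?_).symm
    intro n hn
    have : m ≠ n := fun h => hm (h ▸ hn)
    simp [this]

lemma tendsto_trunc (x : C₀(ℕ, ℝ)) :
    Tendsto (fun N => c0ofFin (Finset.range N) x) atTop (𝓝 x) := by
  rw [Metric.tendsto_atTop]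
  intro ε hε
  have hz := zero_at_infty x
  have hmem : {m : ℕ | dist (x m) 0 < ε / 2} ∈ cocompact ℕ :=
    hz (Metric.ball_mem_nhds 0 (by linarith))
  obtain ⟨K, hK, hKs⟩ := Filter.mem_cocompact.1 hmem
  have hKfin : K.Finite := hK.finite_of_discrete
  obtain ⟨b, hb⟩ := hKfin.bddAbove
  refine ⟨b + 1, fun N hN => ?_⟩
  rw [dist_eq_norm]
  refine lt_of_le_of_lt (c0_norm_le _ (le_of_lt (half_pos hε)) fun m => ?_) (half_lt_self hε)
  by_cases hm : m ∈ Finset.range N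
  · simp only [ZeroAtInftyContinuousMap.coe_sub, Pi.sub_apply, c0ofFin_apply, if_pos hm,
      sub_self, abs_zero]
    positivity
  · simp only [ZeroAtInftyContinuousMap.coe_sub, Pi.sub_apply, c0ofFin_apply, if_neg hm,
      zero_sub, abs_neg]
    have hmN : N ≤ m := by simpa using hm
    have : m ∉ K := fun hmK => by have := hb hmK; omega
    have := hKs this
    simp only [Set.mem_setOf_eq, dist_zero_right, Real.norm_eq_abs] at this
    linarith

variable {Ω : Type*} [MeasurableSpace Ω] {μ : Measure Ω}

lemma lp_coeFn_sum {ι : Type*} [DecidableEq ι] (s : Finset ι) (f : ι → Lp ℝ 1 μ) :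
    ⇑(∑ i ∈ s, f i) =ᵐ[μ] fun ω => ∑ i ∈ s, f i ω := by
  induction s using Finset.induction_on with
  | empty => simp only [Finset.sum_empty]; exact Lp.coeFn_zero ℝ 1 μ
  | @insert a t h ih =>
    rw [Finset.sum_insert h]
    filter_upwards [Lp.coeFn_add (f a) (∑ i ∈ t, f i), ih] with ω h1 h2
    simp only [Finset.sum_insert h, h1, Pi.add_apply, h2]

lemma lp_norm_eq_integral (f : Lp ℝ 1 μ) : ‖f‖ = ∫ ω, |f ω| ∂μ := by
  simpa [Real.norm_eq_abs] using L1.norm_eq_integral_norm f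

lemma lp_norm_of_nonneg {f : Lp ℝ 1 μ} (hf : 0 ≤ f) : ‖f‖ = ∫ ω, f ω ∂μ := by
  rw [lp_norm_eq_integral]
  refine integral_congr_ae ?_
  filter_upwards [(Lp.coeFn_nonneg f).2 hf] with ω hω
  exact abs_of_nonneg hω

lemma lp_smul_nonneg {c : ℝ} (hc : 0 ≤ c) {f : Lp ℝ 1 μ} (hf : 0 ≤ f) : 0 ≤ c • f := by
  rw [← Lp.coeFn_nonneg]
  filter_upwards [Lp.coeFn_smul c f, (Lp.coeFn_nonneg f).2 hf] with ω h1 h2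
  rw [h1]
  exact mul_nonneg hc h2

def evalC0 (n : ℕ) : C₀(ℕ, ℝ) →L[ℝ] ℝ :=
  LinearMap.mkContinuous
    { toFun := fun f => f n
      map_add' := fun f g => rfl
      map_smul' := fun c f => rfl } 1
    (fun f => by
      rw [one_mul, Real.norm_eq_abs, ← ZeroAtInftyContinuousMap.norm_toBCF_eq_norm]
      exact f.toBCF.norm_coe_le_norm n)

@[simp] lemma evalC0_apply (n : ℕ) (f : C₀(ℕ, ℝ)) : evalC0 n f = f n := rfl

end BPBaux

set_option maxHeartbeats 1000000 in
/-- The pair `(c₀, L₁(μ))` has the Bishop–Phelps–Bollobás property for positive operators,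
with `η(ε) = (ε/58)⁴`: whenever `S : c₀ → L₁(μ)` is a positive norm-one operator and
`x₀ ∈ S_{c₀}` satisfies `‖S x₀‖₁ > 1 - η(ε)`, there exist `u₀ ∈ S_{c₀}` and a positive
norm-one operator `T` with `‖T u₀‖₁ = 1`, `‖u₀ - x₀‖∞ < ε` and `‖T - S‖ < ε`. -/
theorem bishopPhelpsBollobas_positive_c0_L1
    {Ω : Type*} [MeasurableSpace Ω] (μ : Measure Ω)
    (ε : ℝ) (hε0 : 0 < ε) (hε1 : ε < 1)
    (S : C₀(ℕ, ℝ) →L[ℝ] Lp ℝ 1 μ)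
    (hSpos : ∀ x : C₀(ℕ, ℝ), (∀ n, 0 ≤ x n) → 0 ≤ S x) (hSnorm : ‖S‖ = 1)
    (x₀ : C₀(ℕ, ℝ)) (hx₀ : ‖x₀‖ = 1)
    (hS : ‖S x₀‖ > 1 - (ε / 58) ^ 4) :
    ∃ (u₀ : C₀(ℕ, ℝ)) (T : C₀(ℕ, ℝ) →L[ℝ] Lp ℝ 1 μ),
      ‖u₀‖ = 1 ∧ (∀ x : C₀(ℕ, ℝ), (∀ n, 0 ≤ x n) → 0 ≤ T x) ∧ ‖T‖ = 1 ∧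
      ‖T u₀‖ = 1 ∧ ‖u₀ - x₀‖ < ε ∧ ‖T - S‖ < ε := by
  classical
  set δ : ℝ := (ε / 58) ^ 2 with hδdef
  have hδ0 : 0 < δ := by positivity
  have hδ1 : δ < 1 / 3364 := by nlinarith
  have hηδ : (ε / 58) ^ 4 = δ ^ 2 := by ring
  have hδε : 7 * δ < ε := by nlinarith
  rw [hηδ] at hS
  -- the columns of S
  set g : ℕ → Lp ℝ 1 μ := fun n => S (eC0 n) with hgdef
  have hg0 : ∀ n, 0 ≤ g n := by
    intro n
    refine hSpos _ (fun m => ?_)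
    rw [eC0_apply]
    split <;> norm_num
  set a : ℕ → ℝ := fun n => ‖g n‖ with hadef
  have ha0 : ∀ n, 0 ≤ a n := fun n => norm_nonneg _
  -- additivity of the norm on nonnegative elements
  have hsum_norm : ∀ (s : Finset ℕ) (f : ℕ → Lp ℝ 1 μ), (∀ n, 0 ≤ f n) →
      ‖∑ n ∈ s, f n‖ = ∑ n ∈ s, ‖f n‖ := by
    intro s f hf
    rw [lp_norm_of_nonneg (Finset.sum_nonneg fun n _ => hf n)]
    rw [integral_congr_ae (lp_coeFn_sum s f),
      integral_finset_sum s (fun n _ => L1.integrable_coeFn (f n))]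
    exact Finset.sum_congr rfl fun n _ => (lp_norm_of_nonneg (hf n)).symm
  have hSsum : ∀ (s : Finset ℕ) (c : ℕ → ℝ), S (c0ofFin s c) = ∑ n ∈ s, c n • g n := by
    intro s c
    rw [c0ofFin_eq_sum, map_sum]
    exact Finset.sum_congr rfl fun n _ => by rw [S.map_smul]
  have P1 : ∀ s : Finset ℕ, ∑ n ∈ s, a n ≤ 1 := by
    intro s
    have h1 : ∑ n ∈ s, a n = ‖S (c0ofFin s (fun _ => 1))‖ := by
      rw [hSsum]
      simp only [one_smul]
      exact (hsum_norm s g hg0).symm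
    rw [h1]
    calc ‖S (c0ofFin s fun _ => 1)‖ ≤ ‖S‖ * ‖c0ofFin s fun _ => 1‖ := S.le_opNorm _
      _ ≤ 1 := by
          rw [hSnorm, one_mul]
          refine c0_norm_le _ zero_le_one fun n => ?_
          simp only [c0ofFin_apply]
          split <;> norm_num
  have P2 : ∀ x : C₀(ℕ, ℝ),
      Tendsto (fun N => ∑ n ∈ Finset.range N, x n • g n) atTop (𝓝 (S x)) := by
    intro x
    have : (fun N => ∑ n ∈ Finset.range N, x n • g n)
        = fun N => S (c0ofFin (Finset.range N) x) := by
      funext N; rw [hSsum]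
    rw [this]
    exact (S.continuous.tendsto x).comp (tendsto_trunc x)
  have hx₀le : ∀ n, |x₀ n| ≤ 1 := fun n => hx₀ ▸ c0_apply_le_norm x₀ n
  have ha_summ : Summable a :=
    summable_of_sum_range_le ha0 (fun N => P1 (Finset.range N))
  have hb_summ : Summable (fun n => |x₀ n| * a n) := by
    refine Summable.of_nonneg_of_le (fun n => by positivity) (fun n => ?_) ha_summ
    calc |x₀ n| * a n ≤ 1 * a n := by
          exact mul_le_mul_of_nonneg_right (hx₀le n) (ha0 n)
      _ = a n := one_mul _
  have P3 : ‖S x₀‖ ≤ ∑' n, |x₀ n| * a n := by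
    refine le_of_tendsto ((continuous_norm.tendsto _).comp (P2 x₀)) ?_
    filter_upwards with N
    calc ‖∑ n ∈ Finset.range N, x₀ n • g n‖ ≤ ∑ n ∈ Finset.range N, |x₀ n| * a n := by
          refine (norm_sum_le _ _).trans (le_of_eq ?_)
          exact Finset.sum_congr rfl fun n _ => by rw [norm_smul, Real.norm_eq_abs]
      _ ≤ ∑' n, |x₀ n| * a n := Summable.sum_le_tsum _ (fun n _ => by positivity) hb_summ
  have hW : ∑' n, (1 - |x₀ n|) * a n < δ ^ 2 := by
    have hsub : ∀ n, (1 - |x₀ n|) * a n = a n - |x₀ n| * a n := fun n => by ring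
    have hsummW : Summable (fun n => (1 - |x₀ n|) * a n) := by
      simp only [hsub]
      exact ha_summ.sub hb_summ
    have htsum : ∑' n, (1 - |x₀ n|) * a n = (∑' n, a n) - ∑' n, |x₀ n| * a n := by
      simp only [hsub]
      exact Summable.tsum_sub ha_summ hb_summ
    have hta : ∑' n, a n ≤ 1 := Summable.tsum_le_of_sum_le ha_summ P1
    rw [htsum]
    have := lt_of_lt_of_le hS P3
    linarith
  have hWnonneg : ∀ n, 0 ≤ (1 - |x₀ n|) * a n := fun n =>
    mul_nonneg (by linarith [hx₀le n]) (ha0 n)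
  have hsummW : Summable (fun n => (1 - |x₀ n|) * a n) := by
    have hsub : ∀ n, (1 - |x₀ n|) * a n = a n - |x₀ n| * a n := fun n => by ring
    simp only [hsub]
    exact ha_summ.sub hb_summ
  -- the set A of big coordinates
  have hAfin : {n : ℕ | 1 - δ < |x₀ n|}.Finite := by
    have hz := zero_at_infty x₀
    have hmem : {m : ℕ | dist (x₀ m) 0 < 1 - δ} ∈ cocompact ℕ := by
      refine hz (Metric.ball_mem_nhds 0 (by linarith))
    obtain ⟨K, hK, hKs⟩ := Filter.mem_cocompact.1 hmem
    refine hK.finite_of_discrete.subset ?_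
    intro n hn
    by_contra hnK
    have := hKs hnK
    simp only [Set.mem_setOf_eq, dist_zero_right, Real.norm_eq_abs] at this hn
    linarith
  set A : Finset ℕ := hAfin.toFinset with hA
  have hmemA : ∀ n, n ∈ A ↔ 1 - δ < |x₀ n| := fun n => by
    rw [hA, Set.Finite.mem_toFinset]; rfl
  have P4 : ∀ s : Finset ℕ, (∀ n ∈ s, n ∉ A) → ∑ n ∈ s, a n < δ := by
    intro s hs
    have h1 : δ * ∑ n ∈ s, a n ≤ ∑' n, (1 - |x₀ n|) * a n := by
      rw [Finset.mul_sum]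
      refine le_trans (Finset.sum_le_sum fun n hn => ?_)
        (Summable.sum_le_tsum s (fun n _ => hWnonneg n) hsummW)
      have : ¬(1 - δ < |x₀ n|) := fun h => hs n hn ((hmemA n).2 h)
      push_neg at this
      exact mul_le_mul_of_nonneg_right (by linarith) (ha0 n)
    nlinarith
  have hAsum : ∑ n ∈ A, a n ≤ 1 := P1 A
  -- A is nonempty
  have hAne : A.Nonempty := by
    by_contra hne
    rw [Finset.not_nonempty_iff_eq_empty] at hne
    have : ∀ n, |x₀ n| ≤ 1 - δ := by
      intro n
      by_contra hc
      push_neg at hc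
      have := (hmemA n).2 hc
      rw [hne] at this
      exact absurd this (Finset.notMem_empty n)
    have := c0_norm_le x₀ (by linarith) this
    rw [hx₀] at this
    linarith
  -- the sign sequence
  set sg : ℕ → ℝ := fun n => if 0 ≤ x₀ n then 1 else -1 with hsg
  have hsg_eq : ∀ n, sg n = if 0 ≤ x₀ n then 1 else -1 := fun n => rfl
  have hsg_abs : ∀ n, |sg n| = 1 := by
    intro n; rw [hsg_eq]
    by_cases hn : 0 ≤ x₀ n <;> simp [hn]
  have hsg_mul : ∀ n, sg n * x₀ n = |x₀ n| := by
    intro n; rw [hsg_eq]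
    by_cases hn : 0 ≤ x₀ n
    · rw [if_pos hn, one_mul, abs_of_nonneg hn]
    · push_neg at hn
      rw [if_neg (not_le.2 hn), neg_one_mul, abs_of_neg hn]
  have hsg_diff : ∀ n, |sg n - x₀ n| = 1 - |x₀ n| := by
    intro n; rw [hsg_eq]
    by_cases hn : 0 ≤ x₀ n
    · rw [if_pos hn, abs_of_nonneg (by linarith [hx₀le n, abs_of_nonneg hn]),
        abs_of_nonneg hn]
    · push_neg at hn
      rw [if_neg (not_le.2 hn),
        abs_of_nonpos (by nlinarith [hx₀le n, abs_of_neg hn]), abs_of_neg hn]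
      ring
  -- u₀
  set u₀ : C₀(ℕ, ℝ) := x₀ + c0ofFin A (fun n => sg n - x₀ n) with hu₀def
  have hu₀_apply : ∀ m, u₀ m = if m ∈ A then sg m else x₀ m := by
    intro m
    rw [hu₀def, ZeroAtInftyContinuousMap.coe_add, Pi.add_apply, c0ofFin_apply]
    split <;> ring
  have hu₀_norm : ‖u₀‖ = 1 := by
    refine le_antisymm (c0_norm_le _ zero_le_one fun n => ?_) ?_
    · rw [hu₀_apply]
      split
      · rw [hsg_abs]
      · exact hx₀le n
    · obtain ⟨n₀, hn₀⟩ := hAne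
      have h1 : |u₀ n₀| = 1 := by rw [hu₀_apply, if_pos hn₀, hsg_abs]
      have := c0_apply_le_norm u₀ n₀
      linarith [h1 ▸ this]
  have hu₀x₀ : ‖u₀ - x₀‖ < ε := by
    have he : u₀ - x₀ = c0ofFin A (fun n => sg n - x₀ n) := by
      rw [hu₀def, add_sub_cancel_left]
    rw [he]
    refine lt_of_le_of_lt (c0_norm_le _ (le_of_lt hδ0) fun n => ?_) (by linarith)
    rw [c0ofFin_apply]
    split
    · rw [hsg_diff]
      have := (hmemA n).1 ‹_›
      linarith
    · simp [le_of_lt hδ0]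
  -- h and its norm
  set h : Lp ℝ 1 μ := ∑ n ∈ A, sg n • g n with hhdef
  have hSh : ‖S x₀ - h‖ ≤ 2 * δ := by
    refine le_of_tendsto ((continuous_norm.tendsto _).comp ((P2 x₀).sub_const h)) ?_
    filter_upwards [eventually_ge_atTop (A.sup id + 1)] with N hN
    have hsub : A ⊆ Finset.range N := by
      intro n hn
      rw [Finset.mem_range]
      have := Finset.le_sup (f := id) hn
      simp only [id] at this
      omega
    show ‖(∑ n ∈ Finset.range N, x₀ n • g n) - h‖ ≤ 2 * δ
    have hsplit : (∑ n ∈ Finset.range N, x₀ n • g n) - h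
        = (∑ n ∈ Finset.range N \ A, x₀ n • g n) + ∑ n ∈ A, (x₀ n - sg n) • g n := by
      rw [hhdef, ← Finset.sum_sdiff hsub, add_sub_assoc]
      congr 1
      rw [← Finset.sum_sub_distrib]
      exact Finset.sum_congr rfl fun n _ => by rw [sub_smul]
    rw [hsplit]
    refine (norm_add_le _ _).trans ?_
    have h1 : ‖∑ n ∈ Finset.range N \ A, x₀ n • g n‖ ≤ δ := by
      refine (norm_sum_le _ _).trans ?_
      refine le_trans (Finset.sum_le_sum (fun n _ => ?_)) (le_of_lt (P4 _ (fun n hn => (Finset.mem_sdiff.1 hn).2)))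
      rw [norm_smul, Real.norm_eq_abs]
      calc |x₀ n| * ‖g n‖ ≤ 1 * ‖g n‖ := mul_le_mul_of_nonneg_right (hx₀le n) (norm_nonneg _)
        _ = a n := one_mul _
    have h2 : ‖∑ n ∈ A, (x₀ n - sg n) • g n‖ ≤ δ := by
      refine (norm_sum_le _ _).trans ?_
      have : ∀ n ∈ A, ‖(x₀ n - sg n) • g n‖ ≤ δ * a n := by
        intro n hn
        rw [norm_smul, Real.norm_eq_abs, abs_sub_comm, hsg_diff]
        have := (hmemA n).1 hn
        exact mul_le_mul_of_nonneg_right (by linarith) (norm_nonneg _)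
      refine le_trans (Finset.sum_le_sum this) ?_
      rw [← Finset.mul_sum]
      calc δ * ∑ n ∈ A, a n ≤ δ * 1 := mul_le_mul_of_nonneg_left hAsum (le_of_lt hδ0)
        _ = δ := mul_one _
    linarith
  have hh_norm : 1 - 3 * δ < ‖h‖ := by
    have h1 : ‖S x₀‖ - ‖h‖ ≤ ‖S x₀ - h‖ := norm_sub_norm_le _ _
    have h2 : δ ^ 2 ≤ δ := by nlinarith
    linarith
  -- measurable representatives
  set H : Ω → ℝ := (Lp.aestronglyMeasurable h).mk _ with hHdef
  have hHsm : StronglyMeasurable H := (Lp.aestronglyMeasurable h).stronglyMeasurable_mk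
  have hHae : ⇑h =ᵐ[μ] H := (Lp.aestronglyMeasurable h).ae_eq_mk
  set G : ℕ → Ω → ℝ := fun n ω => max ((Lp.aestronglyMeasurable (g n)).mk _ ω) 0 with hGdef
  have hGsm : ∀ n, StronglyMeasurable (G n) := fun n =>
    ((Lp.aestronglyMeasurable (g n)).stronglyMeasurable_mk).sup stronglyMeasurable_const
  have hGae : ∀ n, ⇑(g n) =ᵐ[μ] G n := by
    intro n
    filter_upwards [(Lp.aestronglyMeasurable (g n)).ae_eq_mk,
      (Lp.coeFn_nonneg (g n)).2 (hg0 n)] with ω h1 h2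
    show g n ω = max _ 0
    rw [← h1]
    exact (max_eq_left (by simpa using h2)).symm
  have hG0 : ∀ n ω, 0 ≤ G n ω := fun n ω => le_max_right _ _
  have hGint : ∀ n, Integrable (G n) μ := fun n => (L1.integrable_coeFn (g n)).congr (hGae n)
  set Pos : Set Ω := {ω | 0 ≤ H ω} with hPosdef
  have hPosm : MeasurableSet Pos := measurableSet_le measurable_const hHsm.measurable
  set gt : ℕ → Ω → ℝ := fun n => Set.indicator (if 0 ≤ x₀ n then Pos else Posᶜ) (G n) with hgtdef
  have hgt0 : ∀ n ω, 0 ≤ gt n ω := by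
    intro n ω
    exact Set.indicator_apply_nonneg (fun _ => hG0 n ω)
  have hgt_le : ∀ n ω, gt n ω ≤ G n ω := by
    intro n ω
    by_cases hω : ω ∈ (if 0 ≤ x₀ n then Pos else Posᶜ)
    · rw [hgtdef]
      simp only [Set.indicator_of_mem hω]
      exact le_rfl
    · rw [hgtdef]
      simp only [Set.indicator_of_notMem hω]
      exact hG0 n ω
  have hgtint : ∀ n, Integrable (gt n) μ := by
    intro n
    refine (hGint n).indicator ?_
    split
    · exact hPosm
    · exact hPosm.compl
  set t : ℕ → Lp ℝ 1 μ := fun n => (hgtint n).toL1 _ with htdef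
  have ht_ae : ∀ n, ⇑(t n) =ᵐ[μ] gt n := fun n => (hgtint n).coeFn_toL1
  have ht0 : ∀ n, 0 ≤ t n := by
    intro n
    refine (Lp.coeFn_nonneg _).1 ?_
    filter_upwards [ht_ae n] with ω hω
    rw [hω]
    exact hgt0 n ω
  set b : ℕ → ℝ := fun n => ∫ ω, gt n ω ∂μ with hbdef
  have hb0 : ∀ n, 0 ≤ b n := fun n => integral_nonneg (hgt0 n)
  have htnorm : ∀ n, ‖t n‖ = b n := fun n => by
    rw [lp_norm_of_nonneg (ht0 n)]
    exact integral_congr_ae (ht_ae n)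
  have ha_int : ∀ n, a n = ∫ ω, G n ω ∂μ := fun n => by
    rw [hadef]
    simp only
    rw [lp_norm_of_nonneg (hg0 n)]
    exact integral_congr_ae (hGae n)
  have hba : ∀ n, b n ≤ a n := by
    intro n
    rw [ha_int, hbdef]
    exact integral_mono (hgtint n) (hGint n) (hgt_le n)
  have htg_norm : ∀ n, ‖g n - t n‖ = a n - b n := by
    intro n
    have h0 : ⇑(g n - t n) =ᵐ[μ] fun ω => G n ω - gt n ω := by
      filter_upwards [Lp.coeFn_sub (g n) (t n), hGae n, ht_ae n] with ω h1 h2 h3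
      rw [h1, Pi.sub_apply, h2, h3]
    rw [lp_norm_eq_integral]
    rw [integral_congr_ae (g := fun ω => G n ω - gt n ω) ?_]
    · rw [integral_sub (hGint n) (hgtint n), ha_int, hbdef]
    · filter_upwards [h0] with ω h1
      rw [h1, abs_of_nonneg (by linarith [hgt_le n ω])]
  set m : ℝ := ∑ n ∈ A, b n with hmdef
  have hm_le1 : m ≤ 1 := le_trans (Finset.sum_le_sum fun n _ => hba n) hAsum
  -- a.e. representation of h
  have hH_eq : ∀ᵐ ω ∂μ, H ω = ∑ n ∈ A, sg n * G n ω := by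
    have h1 : ∀ᵐ ω ∂μ, ∀ n ∈ A, ⇑(sg n • g n) ω = sg n * G n ω := by
      rw [Filter.eventually_all_finset]
      intro n hn
      filter_upwards [Lp.coeFn_smul (sg n) (g n), hGae n] with ω e1 e2
      rw [e1, Pi.smul_apply, smul_eq_mul, e2]
    filter_upwards [hHae, lp_coeFn_sum A (fun n => sg n • g n), h1] with ω e0 e1 e2
    rw [← e0, hhdef]
    rw [e1]
    exact Finset.sum_congr rfl e2
  -- the key pointwise estimates
  have KP : ∀ᵐ ω ∂μ, |H ω| ≤ (∑ n ∈ A, gt n ω) ∧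
      |∑ n ∈ A, sg n * gt n ω| = ∑ n ∈ A, gt n ω := by
    filter_upwards [hH_eq] with ω hω
    have hsum_nonneg : 0 ≤ ∑ n ∈ A, gt n ω := Finset.sum_nonneg fun n _ => hgt0 n ω
    by_cases hP : 0 ≤ H ω
    · have hgt_eq : ∀ n, gt n ω = if 0 ≤ x₀ n then G n ω else 0 := by
        intro n
        rw [hgtdef]
        by_cases hx : 0 ≤ x₀ n
        · simp only [if_pos hx]
          exact Set.indicator_of_mem (show ω ∈ Pos from hP) _
        · simp only [if_neg hx]
          exact Set.indicator_of_notMem (show ω ∉ Posᶜ from fun hc => hc hP) _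
      have hkey : ∀ n, sg n * gt n ω = gt n ω := by
        intro n
        rw [hsg_eq, hgt_eq]
        by_cases hx : 0 ≤ x₀ n
        · rw [if_pos hx, if_pos hx, one_mul]
        · rw [if_neg hx, if_neg hx, mul_zero]
      constructor
      · rw [abs_of_nonneg hP, hω]
        refine Finset.sum_le_sum fun n _ => ?_
        rw [hsg_eq, hgt_eq]
        by_cases hx : 0 ≤ x₀ n
        · rw [if_pos hx, if_pos hx, one_mul]
        · rw [if_neg hx, if_neg hx, neg_one_mul]
          linarith [hG0 n ω]
      · rw [Finset.sum_congr rfl fun n _ => hkey n, abs_of_nonneg hsum_nonneg]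
    · push_neg at hP
      have hgt_eq : ∀ n, gt n ω = if 0 ≤ x₀ n then 0 else G n ω := by
        intro n
        rw [hgtdef]
        by_cases hx : 0 ≤ x₀ n
        · simp only [if_pos hx]
          exact Set.indicator_of_notMem (show ω ∉ Pos from fun hc => absurd hc (not_le.2 hP)) _
        · simp only [if_neg hx]
          exact Set.indicator_of_mem
            (show ω ∈ Posᶜ from fun hc => absurd hc (not_le.2 hP)) _
      have hkey : ∀ n, sg n * gt n ω = -gt n ω := by
        intro n
        rw [hsg_eq, hgt_eq]
        by_cases hx : 0 ≤ x₀ n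
        · rw [if_pos hx, if_pos hx, mul_zero, neg_zero]
        · rw [if_neg hx, if_neg hx, neg_one_mul]
      constructor
      · rw [abs_of_neg hP, hω, ← Finset.sum_neg_distrib]
        refine Finset.sum_le_sum fun n _ => ?_
        rw [hsg_eq, hgt_eq]
        by_cases hx : 0 ≤ x₀ n
        · rw [if_pos hx, if_pos hx, one_mul]
          linarith [hG0 n ω]
        · rw [if_neg hx, if_neg hx, neg_one_mul, neg_neg]
      · rw [Finset.sum_congr rfl fun n _ => hkey n, Finset.sum_neg_distrib, abs_neg,
          abs_of_nonneg hsum_nonneg]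
  have hint_sum : Integrable (fun ω => ∑ n ∈ A, gt n ω) μ :=
    integrable_finset_sum A fun n _ => hgtint n
  have hm_int : ∫ ω, (∑ n ∈ A, gt n ω) ∂μ = m := by
    rw [integral_finset_sum A fun n _ => hgtint n, hmdef]
  have hm_geq : ‖h‖ ≤ m := by
    rw [lp_norm_eq_integral, ← hm_int]
    refine integral_mono_ae ((L1.integrable_coeFn h).abs.congr ?_) hint_sum ?_
    · filter_upwards [hHae] with ω e
      rw [e]
    · filter_upwards [hHae, KP] with ω e hkp
      rw [e]
      exact hkp.1
  have hm_gt : 1 - 3 * δ < m := lt_of_lt_of_le hh_norm hm_geq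
  have hm_pos : 0 < m := by nlinarith
  have hm_inv_ge : 1 ≤ m⁻¹ := (one_le_inv₀ hm_pos).2 hm_le1
  -- the operator T
  set T : C₀(ℕ, ℝ) →L[ℝ] Lp ℝ 1 μ :=
    ∑ n ∈ A, (evalC0 n).smulRight (m⁻¹ • t n) with hTdef
  have hT_apply : ∀ x : C₀(ℕ, ℝ), T x = ∑ n ∈ A, x n • (m⁻¹ • t n) := by
    intro x
    rw [hTdef, ContinuousLinearMap.sum_apply]
    exact Finset.sum_congr rfl fun n _ => by
      rw [ContinuousLinearMap.smulRight_apply, evalC0_apply]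
  have hTpos : ∀ x : C₀(ℕ, ℝ), (∀ n, 0 ≤ x n) → 0 ≤ T x := by
    intro x hx
    rw [hT_apply]
    refine Finset.sum_nonneg fun n _ => ?_
    exact lp_smul_nonneg (hx n) (lp_smul_nonneg (inv_nonneg.2 hm_pos.le) (ht0 n))
  have hT_le : ∀ x : C₀(ℕ, ℝ), ‖T x‖ ≤ ‖x‖ := by
    intro x
    rw [hT_apply]
    refine (norm_sum_le _ _).trans ?_
    have heach : ∀ n ∈ A, ‖x n • (m⁻¹ • t n)‖ ≤ ‖x‖ * (m⁻¹ * b n) := by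
      intro n hn
      rw [norm_smul, norm_smul, Real.norm_eq_abs, Real.norm_eq_abs, htnorm,
        abs_of_nonneg (inv_nonneg.2 hm_pos.le)]
      exact mul_le_mul_of_nonneg_right (c0_apply_le_norm x n)
        (mul_nonneg (inv_nonneg.2 hm_pos.le) (hb0 n))
    refine le_trans (Finset.sum_le_sum heach) ?_
    rw [← Finset.mul_sum, ← Finset.mul_sum, ← hmdef, inv_mul_cancel₀ hm_pos.ne', mul_one]
  have hTu₀_eq : T u₀ = m⁻¹ • ∑ n ∈ A, sg n • t n := by
    rw [hT_apply, Finset.smul_sum]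
    refine Finset.sum_congr rfl fun n hn => ?_
    rw [hu₀_apply, if_pos hn, smul_comm]
  have hsum_t_norm : ‖∑ n ∈ A, sg n • t n‖ = m := by
    rw [lp_norm_eq_integral, ← hm_int]
    refine integral_congr_ae ?_
    have h1 : ∀ᵐ ω ∂μ, ∀ n ∈ A, (sg n • t n : Lp ℝ 1 μ) ω = sg n * gt n ω := by
      rw [Filter.eventually_all_finset]
      intro n hn
      filter_upwards [Lp.coeFn_smul (sg n) (t n), ht_ae n] with ω e1 e2
      rw [e1, Pi.smul_apply, smul_eq_mul, e2]
    filter_upwards [lp_coeFn_sum A (fun n => sg n • t n), h1, KP] with ω e1 e2 hkp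
    rw [e1, Finset.sum_congr rfl e2, hkp.2]
  have hTu₀ : ‖T u₀‖ = 1 := by
    rw [hTu₀_eq, norm_smul, Real.norm_eq_abs, abs_of_nonneg (inv_nonneg.2 hm_pos.le),
      hsum_t_norm, inv_mul_cancel₀ hm_pos.ne']
  have hT_norm : ‖T‖ = 1 := by
    refine le_antisymm (T.opNorm_le_bound zero_le_one fun x => by rw [one_mul]; exact hT_le x) ?_
    have h1 := T.le_opNorm u₀
    rw [hTu₀, hu₀_norm, mul_one] at h1
    exact h1
  -- distance estimate
  have hTe : ∀ k, T (eC0 k) = if k ∈ A then m⁻¹ • t k else 0 := by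
    intro k
    rw [hT_apply]
    have h1 : ∀ n ∈ A, (eC0 k) n • (m⁻¹ • t n) = if n = k then m⁻¹ • t n else 0 := by
      intro n hn
      rw [eC0_apply]
      split
      · rw [one_smul]
      · rw [zero_smul]
    rw [Finset.sum_congr rfl h1, Finset.sum_ite_eq' A k (fun n => m⁻¹ • t n)]
  have hTSe : ∀ k, ‖(T - S) (eC0 k)‖ = if k ∈ A then ‖m⁻¹ • t k - g k‖ else a k := by
    intro k
    rw [ContinuousLinearMap.sub_apply, hTe]
    split
    · rfl
    · rw [zero_sub, norm_neg]
  set C : ℝ := (∑ n ∈ A, ‖m⁻¹ • t n - g n‖) + δ with hCdef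
  have hC0 : 0 ≤ C := add_nonneg (Finset.sum_nonneg fun n _ => norm_nonneg _) hδ0.le
  have hpart : ∀ N : ℕ, ∑ n ∈ Finset.range N, ‖(T - S) (eC0 n)‖ ≤ C := by
    intro N
    rw [← Finset.sum_inter_add_sum_sdiff (Finset.range N) A (fun n => ‖(T - S) (eC0 n)‖)]
    rw [hCdef]
    refine add_le_add ?_ ?_
    · refine le_trans (le_of_eq (Finset.sum_congr rfl fun n hn => by
        rw [hTSe, if_pos (Finset.mem_inter.1 hn).2])) ?_
      exact Finset.sum_le_sum_of_subset_of_nonneg Finset.inter_subset_right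
        (fun n _ _ => norm_nonneg _)
    · refine le_trans (le_of_eq (Finset.sum_congr rfl fun n hn => by
        rw [hTSe, if_neg (Finset.mem_sdiff.1 hn).2])) ?_
      exact le_of_lt (P4 _ fun n hn => (Finset.mem_sdiff.1 hn).2)
  have hTS_le : ‖T - S‖ ≤ C := by
    refine ContinuousLinearMap.opNorm_le_bound _ hC0 fun x => ?_
    have htt : Tendsto (fun N => ‖(T - S) (c0ofFin (Finset.range N) x)‖) atTop
        (𝓝 ‖(T - S) x‖) :=
      (continuous_norm.tendsto _).comp (((T - S).continuous.tendsto x).comp (tendsto_trunc x))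
    refine le_of_tendsto htt ?_
    filter_upwards with N
    have he : (T - S) (c0ofFin (Finset.range N) x)
        = ∑ n ∈ Finset.range N, x n • ((T - S) (eC0 n)) := by
      rw [c0ofFin_eq_sum, map_sum]
      exact Finset.sum_congr rfl fun n _ => by rw [(T - S).map_smul]
    rw [he]
    refine (norm_sum_le _ _).trans ?_
    have h2 : ∀ n ∈ Finset.range N,
        ‖x n • ((T - S) (eC0 n))‖ ≤ ‖(T - S) (eC0 n)‖ * ‖x‖ := by
      intro n _
      rw [norm_smul, Real.norm_eq_abs, mul_comm]
      exact mul_le_mul_of_nonneg_left (c0_apply_le_norm x n) (norm_nonneg _)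
    refine le_trans (Finset.sum_le_sum h2) ?_
    rw [← Finset.sum_mul]
    exact mul_le_mul_of_nonneg_right (hpart N) (norm_nonneg x)
  have hC_lt : C < ε := by
    have h1 : ∀ n ∈ A, ‖m⁻¹ • t n - g n‖ ≤ (m⁻¹ - 1) * b n + (a n - b n) := by
      intro n hn
      have e1 : m⁻¹ • t n - g n = (m⁻¹ - 1) • t n - (g n - t n) := by
        rw [sub_smul, one_smul]
        abel
      rw [e1]
      refine (norm_sub_le _ _).trans ?_
      rw [norm_smul, Real.norm_eq_abs, abs_of_nonneg (by linarith [hm_inv_ge]), htnorm,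
        htg_norm]
    have h2 : ∑ n ∈ A, ‖m⁻¹ • t n - g n‖ ≤ (m⁻¹ - 1) * m + ((∑ n ∈ A, a n) - m) := by
      refine le_trans (Finset.sum_le_sum h1) ?_
      rw [Finset.sum_add_distrib, ← Finset.mul_sum, ← hmdef, Finset.sum_sub_distrib]
    have h3 : (m⁻¹ - 1) * m = 1 - m := by
      rw [sub_mul, inv_mul_cancel₀ hm_pos.ne', one_mul]
    rw [h3] at h2
    have h4 : C ≤ 2 * (1 - m) + δ := by
      rw [hCdef]
      have := hAsum
      linarith
    have h5 : 1 - m < 3 * δ := by linarith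
    linarith
  exact ⟨u₀, T, hu₀_norm, hTpos, hT_norm, hTu₀, hu₀x₀, lt_of_le_of_lt hTS_le hC_lt⟩
end
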